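/- arXiv:2109.11395 — 6 statements merged into one kernel-verified Lean document; each statement's English description precedes it below -/
import Mathlib

section
/- Let δ_0, …, δ_m be m+1 pairwise distinct real numbers and set κ := (1/2)·min_{i≠j} |δ_i − δ_j| > 0. Let B be a symmetric real m×m matrix and let c > 0. Then there exists an index j ∈ {0, …, m} such that minsp(B + δ_j·c·Id) ≥ κ·c. In particular, the index-selection step in New Q-Newton's method Backtracking G always terminates with some j ∈ {0, …, m}. -/
open scoped RealInnerProductSpace
open Filter Topology

noncomputable section

/-- ℝ^m with the Euclidean inner product and norm. -/
abbrev Euc (m : ℕ) := EuclideanSpace ℝ (Fin m)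

/-- `minsp A = min_{‖e‖=1} ‖A e‖`. -/
def minsp {m : ℕ} (A : Euc m →L[ℝ] Euc m) : ℝ :=
  sInf {r : ℝ | ∃ e : Euc m, ‖e‖ = 1 ∧ r = ‖A e‖}

/-- `κ = (1/2) · min_{i≠j} |δ_i − δ_j|`. -/
def kappa {m : ℕ} (δ : Fin (m + 1) → ℝ) : ℝ :=
  (1 / 2) * sInf {r : ℝ | ∃ i j : Fin (m + 1), i ≠ j ∧ r = |δ i - δ j|}

/-- Given `m+1` pairwise distinct reals `δ_0, …, δ_m`, a symmetric real m×m matrix `B` and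
`c > 0`, there is an index `j` with `minsp(B + δ_j c Id) ≥ κ c`, where
`κ = (1/2) min_{i≠j} |δ_i − δ_j|`. -/
theorem stmt1 {m : ℕ} (hm : 1 ≤ m) (δ : Fin (m + 1) → ℝ) (hδ : Function.Injective δ)
    (B : Matrix (Fin m) (Fin m) ℝ) (hB : B.IsSymm) (c : ℝ) (hc : 0 < c) :
    ∃ j : Fin (m + 1),
      kappa δ * c ≤ minsp (Matrix.toEuclideanCLM (𝕜 := ℝ) (B + (δ j * c) • (1 : Matrix (Fin m) (Fin m) ℝ))) := by
  classical
  set S : Set ℝ := {r : ℝ | ∃ i j : Fin (m + 1), i ≠ j ∧ r = |δ i - δ j|} with hSdef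
  have hSfin : S.Finite := by
    have hsub : S ⊆ Set.range (fun p : Fin (m + 1) × Fin (m + 1) => |δ p.1 - δ p.2|) := by
      rintro r ⟨i, j, -, rfl⟩; exact ⟨(i, j), rfl⟩
    exact (Set.finite_range _).subset hsub
  have h01 : (0 : Fin (m + 1)) ≠ 1 := by
    have : (1 : ℕ) < m + 1 := by omega
    simp [Fin.ext_iff, Nat.mod_eq_of_lt this]
  have hSne : S.Nonempty := ⟨|δ 0 - δ 1|, 0, 1, h01, rfl⟩
  have hκeq : kappa δ = (1 / 2) * sInf S := rfl
  have hκpos : 0 < kappa δ := by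
    obtain ⟨i0, j0, hij0, hval⟩ := hSne.csInf_mem hSfin
    have : 0 < sInf S := by
      rw [hval]
      have : δ i0 ≠ δ j0 := fun h => hij0 (hδ h)
      have : δ i0 - δ j0 ≠ 0 := sub_ne_zero_of_ne this
      exact abs_pos.mpr this
    rw [hκeq]; linarith
  have hκle : ∀ i j : Fin (m + 1), i ≠ j → 2 * kappa δ ≤ |δ i - δ j| := by
    intro i j h
    have := csInf_le hSfin.bddBelow (show |δ i - δ j| ∈ S from ⟨i, j, h, rfl⟩)
    rw [hκeq]; linarith
  -- B is Hermitian
  have hB' : B.IsHermitian := by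
    rw [Matrix.IsHermitian, Matrix.conjTranspose_eq_transpose_of_trivial]; exact hB
  set μ : Fin m → ℝ := hB'.eigenvalues with hμdef
  set b : OrthonormalBasis (Fin m) ℝ (Euc m) := hB'.eigenvectorBasis with hbdef
  -- key pigeonhole step
  have key : ∃ j : Fin (m + 1), ∀ i : Fin m, kappa δ * c ≤ |μ i + δ j * c| := by
    by_contra hcon
    push_neg at hcon
    choose f hf using hcon
    obtain ⟨j, j', hne, hfe⟩ := Fintype.exists_ne_map_eq_of_card_lt f (by simp)
    have h1 := hf j
    have h2 := hf j'
    rw [hfe] at h1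
    have habs : |δ j * c - δ j' * c| ≤ |μ (f j') + δ j * c| + |μ (f j') + δ j' * c| := by
      have : δ j * c - δ j' * c = (μ (f j') + δ j * c) - (μ (f j') + δ j' * c) := by ring
      rw [this]
      exact abs_sub _ _
    have heq : |δ j * c - δ j' * c| = |δ j - δ j'| * c := by
      rw [show δ j * c - δ j' * c = (δ j - δ j') * c by ring, abs_mul, abs_of_pos hc]
    have h4 := hκle j j' hne
    rw [heq] at habs
    nlinarith
  obtain ⟨j, hj⟩ := key
  refine ⟨j, ?_⟩
  set A : Matrix (Fin m) (Fin m) ℝ := B + (δ j * c) • (1 : Matrix (Fin m) (Fin m) ℝ) with hAdef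
  have hA : A.IsHermitian := by
    apply hB'.add
    rw [Matrix.IsHermitian, Matrix.conjTranspose_eq_transpose_of_trivial]
    simp [Matrix.transpose_smul]
  set T := Matrix.toEuclideanCLM (𝕜 := ℝ) A with hTdef
  have hsymm : (Matrix.toEuclideanLin A).IsSymmetric := Matrix.isHermitian_iff_isSymmetric.mp hA
  -- T acts on the eigenbasis of B
  have hTb : ∀ i : Fin m, T (b i) = (μ i + δ j * c) • b i := by
    intro i
    apply (WithLp.equiv 2 (Fin m → ℝ)).injective
    rw [WithLp.equiv_apply, Matrix.ofLp_toEuclideanCLM]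
    have hmul := hB'.mulVec_eigenvectorBasis i
    show Matrix.mulVec A _ = _
    rw [hAdef, Matrix.add_mulVec, Matrix.smul_mulVec, Matrix.one_mulVec]
    show Matrix.mulVec B ⇑(b i) + (δ j * c) • ⇑(b i) = _
    rw [hmul]
    funext k
    simp [add_smul, hμdef, hbdef]
  have hTinner : ∀ (i : Fin m) (e : Euc m), ⟪b i, T e⟫ = (μ i + δ j * c) * ⟪b i, e⟫ := by
    intro i e
    have hTE : ∀ x : Euc m, T x = Matrix.toEuclideanLin A x := by
      intro x
      rw [hTdef, ← Matrix.coe_toEuclideanCLM_eq_toEuclideanLin]; rfl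
    rw [hTE e, ← hsymm (b i) e, ← hTE (b i), hTb i, real_inner_smul_left]
  -- lower bound on ‖T e‖ for unit e
  have hnorm : ∀ e : Euc m, ‖e‖ = 1 → kappa δ * c ≤ ‖T e‖ := by
    intro e he
    have hTe : ‖T e‖ ^ 2 = ∑ i, ⟪b i, T e⟫ ^ 2 := by
      rw [← real_inner_self_eq_norm_sq, ← b.sum_inner_mul_inner (T e) (T e)]
      refine Finset.sum_congr rfl fun i _ => ?_
      rw [real_inner_comm (T e) (b i)]; ring
    have hee : (1 : ℝ) = ∑ i, ⟪b i, e⟫ ^ 2 := by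
      have : ‖e‖ ^ 2 = ∑ i, ⟪b i, e⟫ ^ 2 := by
        rw [← real_inner_self_eq_norm_sq, ← b.sum_inner_mul_inner e e]
        refine Finset.sum_congr rfl fun i _ => ?_
        rw [real_inner_comm e (b i)]; ring
      rw [← this, he]; norm_num
    have hsq : (kappa δ * c) ^ 2 ≤ ‖T e‖ ^ 2 := by
      rw [hTe]
      calc (kappa δ * c) ^ 2 = ∑ i, (kappa δ * c) ^ 2 * ⟪b i, e⟫ ^ 2 := by
            rw [← Finset.mul_sum, ← hee, mul_one]
        _ ≤ ∑ i, ⟪b i, T e⟫ ^ 2 := by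
            refine Finset.sum_le_sum fun i _ => ?_
            rw [hTinner i e, mul_pow]
            have h1 := hj i
            have h2 : (kappa δ * c) ^ 2 ≤ (μ i + δ j * c) ^ 2 := by
              rw [← sq_abs (μ i + δ j * c)]
              have h0 : 0 ≤ kappa δ * c := le_of_lt (mul_pos hκpos hc)
              nlinarith
            nlinarith [sq_nonneg (⟪b i, e⟫ : ℝ)]
    have hTn : 0 ≤ ‖T e‖ := norm_nonneg _
    nlinarith [mul_pos hκpos hc]
  -- conclude via sInf
  rw [minsp]
  apply le_csInf
  · refine ⟨‖T (EuclideanSpace.single (⟨0, hm⟩ : Fin m) (1 : ℝ))‖,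
      EuclideanSpace.single (⟨0, hm⟩ : Fin m) (1 : ℝ), ?_, rfl⟩
    rw [EuclideanSpace.norm_single]; norm_num
  · rintro r ⟨e, he, rfl⟩
    exact hnorm e he
end
end

section
/- (Descent property.) Let f : ℝ^m → ℝ be a C³ function and let {x_n} be a sequence generated by New Q-Newton's method Backtracking G. Then f(x_{n+1}) ≤ f(x_n) for all n ≥ 0. -/
open scoped RealInnerProductSpace
open Filter Topology

noncomputable section

/-- The Hessian `∇²f(x)` of `f` at `x`, as a continuous linear map
(the derivative of the gradient). -/
def hessOp {m : ℕ} (f : Euc m → ℝ) (x : Euc m) : Euc m →L[ℝ] Euc m :=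
  fderiv ℝ (gradient f) x

/-- `A(x) = ∇²f(x) + δ_j ‖∇f(x)‖^τ · Id`. -/
def Aop {m : ℕ} (f : Euc m → ℝ) (δj τ : ℝ) (x : Euc m) : Euc m →L[ℝ] Euc m :=
  hessOp f x + (δj * ‖gradient f x‖ ^ τ) • ContinuousLinearMap.id ℝ (Euc m)

/-- The index `j` is acceptable at `x`: `minsp(∇²f(x) + δ_j‖∇f(x)‖^τ Id) ≥ κ‖∇f(x)‖^τ`. -/
def goodIdx {m : ℕ} (δ : Fin (m + 1) → ℝ) (τ : ℝ) (f : Euc m → ℝ) (x : Euc m)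
    (j : Fin (m + 1)) : Prop :=
  kappa δ * ‖gradient f x‖ ^ τ ≤ minsp (Aop f (δ j) τ x)

/-- The step direction `w = Σᵢ (⟨∇f(x), eᵢ⟩/‖A eᵢ‖) eᵢ`. -/
def dirW {m : ℕ} (f : Euc m → ℝ) (A : Euc m →L[ℝ] Euc m) (e : Fin m → Euc m) (x : Euc m) :
    Euc m :=
  ∑ i : Fin m, (⟪gradient f x, e i⟫ / ‖A (e i)‖) • e i

/-- The normalised step direction `ŵ = w / max{1, ‖w‖}`. -/
def hatW {m : ℕ} (f : Euc m → ℝ) (A : Euc m →L[ℝ] Euc m) (e : Fin m → Euc m) (x : Euc m) :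
    Euc m :=
  (max 1 ‖dirW f A e x‖)⁻¹ • dirW f A e x

/-- Armijo's condition: `f(x − γ v) − f(x) ≤ −(1/3) γ ⟨v, ∇f(x)⟩`. -/
def armijo {m : ℕ} (f : Euc m → ℝ) (x v : Euc m) (γ : ℝ) : Prop :=
  f (x - γ • v) - f x ≤ -(γ * ⟪v, gradient f x⟫) / 3

/-- One step of New Q-Newton's method Backtracking G, with orthonormal basis `e`,
selected index `j` (the least acceptable index), current point `x` and next point `x'`. -/
def IsQNGStep {m : ℕ} (δ : Fin (m + 1) → ℝ) (τ γ0 : ℝ) (f : Euc m → ℝ)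
    (e : Fin m → Euc m) (j : Fin (m + 1)) (x x' : Euc m) : Prop :=
  (gradient f x = 0 → x' = x) ∧
  (gradient f x ≠ 0 →
    goodIdx δ τ f x j ∧ (∀ j' : Fin (m + 1), j' < j → ¬ goodIdx δ τ f x j') ∧
    ∃ p : ℕ,
      armijo f x (hatW f (Aop f (δ j) τ x) e x) (γ0 * (1 / 3) ^ p) ∧
      (∀ q : ℕ, q < p → ¬ armijo f x (hatW f (Aop f (δ j) τ x) e x) (γ0 * (1 / 3) ^ q)) ∧
      x' = x - (γ0 * (1 / 3) ^ p) • hatW f (Aop f (δ j) τ x) e x)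

/-- `x : ℕ → ℝ^m` is generated by New Q-Newton's method Backtracking G, with
orthonormal bases `e n` and selected indices `j n` at step `n`. -/
def IsQNGSeq {m : ℕ} (δ : Fin (m + 1) → ℝ) (τ γ0 : ℝ) (f : Euc m → ℝ)
    (e : ℕ → Fin m → Euc m) (j : ℕ → Fin (m + 1)) (x : ℕ → Euc m) : Prop :=
  ∀ n : ℕ, Orthonormal ℝ (e n) ∧ IsQNGStep δ τ γ0 f (e n) (j n) (x n) (x (n + 1))

/-- (Descent property.) If `f` is `C³` and `{x_n}` is generated by New Q-Newton's method
Backtracking G, then `f(x_{n+1}) ≤ f(x_n)` for all `n`. -/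
theorem stmt2 {m : ℕ} (hm : 1 ≤ m) (δ : Fin (m + 1) → ℝ) (hδ : Function.Injective δ)
    (τ γ0 : ℝ) (hτ : 0 < τ) (hγ0 : 0 < γ0) (hγ1 : γ0 < 1)
    (f : Euc m → ℝ) (hf : ContDiff ℝ 3 f)
    (e : ℕ → Fin m → Euc m) (j : ℕ → Fin (m + 1)) (x : ℕ → Euc m)
    (hseq : IsQNGSeq δ τ γ0 f e j x) :
    ∀ n : ℕ, f (x (n + 1)) ≤ f (x n) := by
  intro n
  obtain ⟨-, h0, h1⟩ := hseq n
  by_cases hg : gradient f (x n) = 0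
  · rw [h0 hg]
  · obtain ⟨-, -, p, harm, -, hx'⟩ := h1 hg
    set v := hatW f (Aop f (δ (j n)) τ (x n)) (e n) (x n) with hv
    have hvg : 0 ≤ ⟪v, gradient f (x n)⟫ := by
      rw [hv, hatW, real_inner_smul_left]
      apply mul_nonneg
      · positivity
      · rw [dirW, sum_inner]
        apply Finset.sum_nonneg
        intro i _
        rw [real_inner_smul_left]
        have : ⟪e n i, gradient f (x n)⟫ = ⟪gradient f (x n), e n i⟫ :=
          real_inner_comm _ _
        rw [this]
        have : ⟪gradient f (x n), e n i⟫ / ‖(Aop f (δ (j n)) τ (x n)) (e n i)‖ *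
            ⟪gradient f (x n), e n i⟫ =
            ⟪gradient f (x n), e n i⟫ ^ 2 / ‖(Aop f (δ (j n)) τ (x n)) (e n i)‖ := by
          ring
        rw [this]
        positivity
    rw [armijo] at harm
    rw [hx']
    have hγ : 0 ≤ γ0 * (1/3 : ℝ)^p := by positivity
    nlinarith [mul_nonneg hγ hvg]
end
end

section
/- Let f : ℝ^m → ℝ be a C³ function and let {x_n} be a sequence generated by New Q-Newton's method Backtracking G. If x_∞ is a cluster point of {x_n} (i.e. some subsequence of {x_n} converges to x_∞), then ∇f(x_∞) = 0; that is, x_∞ is a critical point of f. -/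
open scoped RealInnerProductSpace
open Filter Topology

set_option maxHeartbeats 1000000

noncomputable section

/-! ### Auxiliary lemmas -/

lemma minsp_le {m : ℕ} (A : Euc m →L[ℝ] Euc m) {e : Euc m} (he : ‖e‖ = 1) :
    minsp A ≤ ‖A e‖ :=
  csInf_le ⟨0, by rintro r ⟨u, -, rfl⟩; positivity⟩ ⟨e, he, rfl⟩

lemma kappa_pos {m : ℕ} (hm : 1 ≤ m) {δ : Fin (m + 1) → ℝ} (hδ : Function.Injective δ) :
    0 < kappa δ := by
  set S : Set ℝ := {r : ℝ | ∃ i j : Fin (m + 1), i ≠ j ∧ r = |δ i - δ j|} with hS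
  have hfin : S.Finite := by
    have : S ⊆ (fun p : Fin (m+1) × Fin (m+1) => |δ p.1 - δ p.2|) '' Set.univ := by
      rintro r ⟨i, j, hij, rfl⟩; exact ⟨(i, j), trivial, rfl⟩
    exact (Set.toFinite _).subset this
  have hne : S.Nonempty := by
    refine ⟨|δ 0 - δ 1|, 0, 1, ?_, rfl⟩
    intro h
    have := congrArg Fin.val h
    simp [Fin.val_one'] at this
    omega
  obtain ⟨i, j, hij, hval⟩ := hne.csInf_mem hfin
  have : 0 < sInf S := by
    rw [hval]
    exact abs_pos.mpr (sub_ne_zero.mpr fun h => hij (hδ h))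
  rw [kappa]; linarith

lemma contDiff_gradient {m : ℕ} {f : Euc m → ℝ} (hf : ContDiff ℝ 3 f) :
    ContDiff ℝ 2 (gradient f) :=
  ((InnerProductSpace.toDual ℝ (Euc m)).symm.contDiff).comp (hf.fderiv_right (by norm_num))

lemma fderiv_eq_inner {m : ℕ} (f : Euc m → ℝ) (y v : Euc m) :
    fderiv ℝ f y v = ⟪gradient f y, v⟫ := (InnerProductSpace.toDual_symm_apply).symm

lemma inner_dirW {m : ℕ} (f : Euc m → ℝ) (A : Euc m →L[ℝ] Euc m) (e : Fin m → Euc m)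
    (x : Euc m) :
    ⟪dirW f A e x, gradient f x⟫ = ∑ i : Fin m, ⟪gradient f x, e i⟫ ^ 2 / ‖A (e i)‖ := by
  rw [dirW, sum_inner]
  refine Finset.sum_congr rfl fun i _ => ?_
  rw [real_inner_smul_left, real_inner_comm, div_mul_eq_mul_div, ← sq]

lemma inner_dirW_nonneg {m : ℕ} (f : Euc m → ℝ) (A : Euc m →L[ℝ] Euc m) (e : Fin m → Euc m)
    (x : Euc m) : 0 ≤ ⟪dirW f A e x, gradient f x⟫ := by
  rw [inner_dirW]
  exact Finset.sum_nonneg fun i _ => div_nonneg (sq_nonneg _) (norm_nonneg _)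

lemma inner_hatW {m : ℕ} (f : Euc m → ℝ) (A : Euc m →L[ℝ] Euc m) (e : Fin m → Euc m)
    (x : Euc m) :
    ⟪hatW f A e x, gradient f x⟫ = (max 1 ‖dirW f A e x‖)⁻¹ * ⟪dirW f A e x, gradient f x⟫ := by
  rw [hatW, real_inner_smul_left]

lemma inner_hatW_nonneg {m : ℕ} (f : Euc m → ℝ) (A : Euc m →L[ℝ] Euc m) (e : Fin m → Euc m)
    (x : Euc m) : 0 ≤ ⟪hatW f A e x, gradient f x⟫ := by
  rw [inner_hatW]
  have h1 : (0:ℝ) < max 1 ‖dirW f A e x‖ := lt_max_of_lt_left one_pos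
  exact mul_nonneg (by positivity) (inner_dirW_nonneg f A e x)

lemma norm_hatW_le_one {m : ℕ} (f : Euc m → ℝ) (A : Euc m →L[ℝ] Euc m) (e : Fin m → Euc m)
    (x : Euc m) : ‖hatW f A e x‖ ≤ 1 := by
  rw [hatW, norm_smul, Real.norm_eq_abs]
  have h1 : (0:ℝ) < max 1 ‖dirW f A e x‖ := lt_max_of_lt_left one_pos
  rw [abs_of_pos (by positivity), ← div_eq_inv_mul, div_le_one h1]
  exact le_max_right _ _

lemma parseval {m : ℕ} (hm : 1 ≤ m) {ee : Fin m → Euc m} (hee : Orthonormal ℝ ee) (g : Euc m) :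
    ∑ i : Fin m, ⟪g, ee i⟫ ^ 2 = ‖g‖ ^ 2 := by
  have hcard : Fintype.card (Fin m) = Module.finrank ℝ (Euc m) := by
    simp [finrank_euclideanSpace_fin]
  haveI : Nonempty (Fin m) := ⟨⟨0, hm⟩⟩
  have hsp : ⊤ ≤ Submodule.span ℝ (Set.range ee) := by
    rw [← coe_basisOfOrthonormalOfCardEqFinrank hee hcard]
    exact (basisOfOrthonormalOfCardEqFinrank hee hcard).span_eq.ge
  let b : OrthonormalBasis (Fin m) ℝ (Euc m) := OrthonormalBasis.mk hee hsp
  have hb : ∀ i, b i = ee i := fun i => congrFun (OrthonormalBasis.coe_mk hee hsp) i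
  have h := b.sum_inner_mul_inner g g
  rw [real_inner_self_eq_norm_sq] at h
  rw [← h]
  exact Finset.sum_congr rfl fun i _ => by rw [hb, sq, real_inner_comm]

lemma quad_bound {m : ℕ} {f : Euc m → ℝ} (hf : ContDiff ℝ 3 f) {s : Set (Euc m)}
    (hs : Convex ℝ s) {H : ℝ} (hH : ∀ y ∈ s, ‖hessOp f y‖ ≤ H)
    {x v : Euc m} (hx : x ∈ s) (hxv : x + v ∈ s) :
    f (x + v) - f x ≤ ⟪gradient f x, v⟫ + H * ‖v‖ ^ 2 := by
  have hdf : Differentiable ℝ f := hf.differentiable (by norm_num)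
  have hdg : Differentiable ℝ (gradient f) := (contDiff_gradient hf).differentiable (by norm_num)
  have hmem : ∀ t ∈ Set.Icc (0:ℝ) 1, x + t • v ∈ s := by
    intro t ht
    have h := hs hx hxv (by linarith [ht.2] : (0:ℝ) ≤ 1 - t) ht.1 (by ring)
    convert h using 1
    module
  have hgb : ∀ t ∈ Set.Icc (0:ℝ) 1, ‖gradient f (x + t • v) - gradient f x‖ ≤ H * ‖v‖ := by
    intro t ht
    have h := hs.norm_image_sub_le_of_norm_fderiv_le (f := gradient f)
      (fun y _ => hdg y) (fun y hy => hH y hy) hx (hmem t ht)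
    calc ‖gradient f (x + t • v) - gradient f x‖ ≤ H * ‖x + t • v - x‖ := h
      _ ≤ H * ‖v‖ := by
          have hH0 : 0 ≤ H := le_trans (norm_nonneg _) (hH x hx)
          have heq : ‖x + t • v - x‖ = |t| * ‖v‖ := by
            rw [add_sub_cancel_left, norm_smul, Real.norm_eq_abs]
          rw [heq]
          have h1 : |t| ≤ 1 := abs_le.mpr ⟨by linarith [ht.1], ht.2⟩
          nlinarith [norm_nonneg v, mul_nonneg (mul_nonneg hH0 (norm_nonneg v)) (sub_nonneg.mpr h1)]
  set u : ℝ → ℝ := fun t => f (x + t • v) - t * ⟪gradient f x, v⟫ with hu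
  have hderiv : ∀ t ∈ Set.Icc (0:ℝ) 1,
      HasDerivWithinAt u (⟪gradient f (x + t • v), v⟫ - ⟪gradient f x, v⟫)
        (Set.Icc (0:ℝ) 1) t := by
    intro t ht
    have hline : HasDerivAt (fun t : ℝ => x + t • v) v t := by
      simpa using ((hasDerivAt_id t).smul_const v).const_add x
    have h1 : HasDerivAt (fun t : ℝ => f (x + t • v)) (fderiv ℝ f (x + t • v) v) t :=
      (hdf (x + t • v)).hasFDerivAt.comp_hasDerivAt t hline
    rw [fderiv_eq_inner] at h1
    exact ((h1.sub ((hasDerivAt_mul_const _).congr_deriv rfl))).hasDerivWithinAt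
  have hbound : ∀ t ∈ Set.Ico (0:ℝ) 1,
      ‖⟪gradient f (x + t • v), v⟫ - ⟪gradient f x, v⟫‖ ≤ H * ‖v‖ ^ 2 := by
    intro t ht
    rw [← inner_sub_left, Real.norm_eq_abs]
    calc |⟪gradient f (x + t • v) - gradient f x, v⟫|
        ≤ ‖gradient f (x + t • v) - gradient f x‖ * ‖v‖ := abs_real_inner_le_norm _ _
      _ ≤ (H * ‖v‖) * ‖v‖ := by
          have := hgb t ⟨ht.1, le_of_lt ht.2⟩
          nlinarith [norm_nonneg v]
      _ = H * ‖v‖ ^ 2 := by ring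
  have key := norm_image_sub_le_of_norm_deriv_le_segment' hderiv hbound 1
    (Set.right_mem_Icc.mpr zero_le_one)
  have hu1 : u 1 = f (x + v) - ⟪gradient f x, v⟫ := by simp [hu]
  have hu0 : u 0 = f x := by simp [hu]
  rw [hu1, hu0, Real.norm_eq_abs] at key
  have h2 := abs_le.mp (by linarith [key] : |f (x + v) - ⟪gradient f x, v⟫ - f x| ≤ H * ‖v‖ ^ 2)
  linarith [h2.2]

lemma key_lower {m : ℕ} (hm : 1 ≤ m) {f : Euc m → ℝ} {δ : Fin (m + 1) → ℝ} {τ : ℝ}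
    (hτ : 0 < τ) (hκ : 0 < kappa δ) {y : Euc m} {c C M : ℝ} (hc : 0 < c)
    (hgc : c ≤ ‖gradient f y‖) (hgC : ‖gradient f y‖ ≤ C) (hM : 0 < M) {jj : Fin (m + 1)}
    (hA : ‖Aop f (δ jj) τ y‖ ≤ M) {ee : Fin m → Euc m} (hee : Orthonormal ℝ ee)
    (hgood : goodIdx δ τ f y jj) :
    (c ^ 2 / M) / max 1 (m * C / (kappa δ * c ^ τ)) ≤
      ⟪hatW f (Aop f (δ jj) τ y) ee y, gradient f y⟫ := by
  set A := Aop f (δ jj) τ y with hAdef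
  set gy := gradient f y with hgy
  set w := dirW f A ee y with hw
  have hct : (0:ℝ) < c ^ τ := Real.rpow_pos_of_pos hc τ
  have hgyτ : c ^ τ ≤ ‖gy‖ ^ τ := Real.rpow_le_rpow hc.le hgc hτ.le
  have hCpos : 0 < C := lt_of_lt_of_le hc (hgc.trans hgC)
  have hunit : ∀ i, ‖ee i‖ = 1 := fun i => hee.1 i
  have hlb : ∀ i, kappa δ * c ^ τ ≤ ‖A (ee i)‖ := by
    intro i
    calc kappa δ * c ^ τ ≤ kappa δ * ‖gy‖ ^ τ := by gcongr
      _ ≤ minsp A := hgood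
      _ ≤ ‖A (ee i)‖ := minsp_le A (hunit i)
  have hub : ∀ i, ‖A (ee i)‖ ≤ M := by
    intro i
    calc ‖A (ee i)‖ ≤ ‖A‖ * ‖ee i‖ := A.le_opNorm _
      _ = ‖A‖ := by rw [hunit i, mul_one]
      _ ≤ M := hA
  have hpos : ∀ i, (0:ℝ) < ‖A (ee i)‖ := fun i => lt_of_lt_of_le (by positivity) (hlb i)
  have hwinner : c ^ 2 / M ≤ ⟪w, gy⟫ := by
    rw [hw, inner_dirW]
    calc c ^ 2 / M ≤ ‖gy‖ ^ 2 / M := by gcongr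
      _ = ∑ i : Fin m, ⟪gy, ee i⟫ ^ 2 / M := by
          rw [← Finset.sum_div, parseval hm hee]
      _ ≤ ∑ i : Fin m, ⟪gy, ee i⟫ ^ 2 / ‖A (ee i)‖ :=
          Finset.sum_le_sum fun i _ =>
            div_le_div_of_nonneg_left (sq_nonneg _) (hpos i) (hub i)
  have hwnorm : ‖w‖ ≤ m * C / (kappa δ * c ^ τ) := by
    rw [hw, dirW]
    calc ‖∑ i : Fin m, (⟪gy, ee i⟫ / ‖A (ee i)‖) • ee i‖
        ≤ ∑ i : Fin m, ‖(⟪gy, ee i⟫ / ‖A (ee i)‖) • ee i‖ := norm_sum_le _ _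
      _ ≤ ∑ i : Fin m, C / (kappa δ * c ^ τ) := by
          refine Finset.sum_le_sum fun i _ => ?_
          rw [norm_smul, Real.norm_eq_abs, hunit i, mul_one, abs_div,
            abs_of_pos (hpos i)]
          have h1 : |⟪gy, ee i⟫| ≤ C := by
            calc |⟪gy, ee i⟫| ≤ ‖gy‖ * ‖ee i‖ := abs_real_inner_le_norm _ _
              _ ≤ C := by rw [hunit i, mul_one]; exact hgC
          exact div_le_div₀ hCpos.le h1 (by positivity) (hlb i)
      _ = m * C / (kappa δ * c ^ τ) := by
          rw [Finset.sum_const, Finset.card_univ, Fintype.card_fin, nsmul_eq_mul, mul_div_assoc]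
  rw [inner_hatW, ← div_eq_inv_mul]
  have h1 : (0:ℝ) < max 1 ‖w‖ := lt_max_of_lt_left one_pos
  refine div_le_div₀ (le_trans (by positivity) hwinner) hwinner h1 ?_
  exact max_le_max le_rfl hwnorm

/-- If `{x_n}` is generated by New Q-Newton's method Backtracking G for a `C³` function `f`
and `xinf` is a cluster point of `{x_n}` (some subsequence converges to `xinf`),
then `∇f(xinf) = 0`, i.e. `xinf` is a critical point of `f`. -/
theorem stmt3 {m : ℕ} (hm : 1 ≤ m) (δ : Fin (m + 1) → ℝ) (hδ : Function.Injective δ)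
    (τ γ0 : ℝ) (hτ : 0 < τ) (hγ0 : 0 < γ0) (hγ1 : γ0 < 1)
    (f : Euc m → ℝ) (hf : ContDiff ℝ 3 f)
    (e : ℕ → Fin m → Euc m) (j : ℕ → Fin (m + 1)) (x : ℕ → Euc m)
    (hseq : IsQNGSeq δ τ γ0 f e j x)
    (xinf : Euc m) (hcl : ∃ φ : ℕ → ℕ, StrictMono φ ∧ Tendsto (fun k => x (φ k)) atTop (𝓝 xinf)) :
    gradient f xinf = 0 := by
  by_contra hg0
  obtain ⟨φ, hφm, hφt⟩ := hcl
  have hκ : 0 < kappa δ := kappa_pos hm hδ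
  have hgcont : Continuous (gradient f) := (contDiff_gradient hf).continuous
  have hhcont : Continuous (hessOp f) :=
    ((contDiff_gradient hf).fderiv_right (le_refl _) : ContDiff ℝ 1 (fderiv ℝ (gradient f))).continuous
  -- monotonicity of f along the sequence
  have hmono : ∀ n, f (x (n + 1)) ≤ f (x n) := by
    intro n
    obtain ⟨hon, h0, h1⟩ := hseq n
    by_cases hz : gradient f (x n) = 0
    · rw [h0 hz]
    · obtain ⟨-, -, p, harm, -, hx'⟩ := h1 hz
      have hp : (0:ℝ) < γ0 * (1/3:ℝ) ^ p := by positivity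
      have hin := inner_hatW_nonneg f (Aop f (δ (j n)) τ (x n)) (e n) (x n)
      have harm' := harm
      unfold armijo at harm'
      rw [hx']
      nlinarith [mul_nonneg hp.le hin]
  have hanti : Antitone fun n => f (x n) := antitone_nat_of_succ_le hmono
  -- convergence of f (x n)
  have hfsub : Tendsto (fun k => f (x (φ k))) atTop (𝓝 (f xinf)) :=
    (hf.continuous.tendsto xinf).comp hφt
  have hlow : ∀ n, f xinf ≤ f (x n) := by
    intro n
    refine le_of_tendsto hfsub ?_
    filter_upwards [eventually_ge_atTop n] with k hk
    exact hanti (le_trans hk (hφm.le_apply))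
  have hbdd : BddBelow (Set.range fun n => f (x n)) := by
    refine ⟨f xinf, ?_⟩
    rintro y ⟨n, rfl⟩
    exact hlow n
  have hLconv : Tendsto (fun n => f (x n)) atTop (𝓝 (⨅ n, f (x n))) :=
    tendsto_atTop_ciInf hanti hbdd
  have hLeq : (⨅ n, f (x n)) = f xinf :=
    tendsto_nhds_unique (hLconv.comp hφm.tendsto_atTop) hfsub
  have hconv : Tendsto (fun n => f (x n)) atTop (𝓝 (f xinf)) := hLeq ▸ hLconv
  have hdiff0 : Tendsto (fun n => f (x n) - f (x (n + 1))) atTop (𝓝 0) := by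
    have h2 : Tendsto (fun n => f (x (n + 1))) atTop (𝓝 (f xinf)) :=
      hconv.comp (tendsto_add_atTop_nat 1)
    simpa using hconv.sub h2
  -- choose a good ball around xinf
  set c : ℝ := ‖gradient f xinf‖ / 2 with hcdef
  have hgn0 : 0 < ‖gradient f xinf‖ := norm_pos_iff.mpr hg0
  have hc : 0 < c := by positivity
  obtain ⟨r1, hr1, hr1p⟩ : ∃ r1 > 0, ∀ y : Euc m, dist y xinf < r1 →
      dist (gradient f y) (gradient f xinf) < c := by
    have h := Metric.continuousAt_iff.mp (hgcont.continuousAt (x := xinf)) c hc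
    obtain ⟨d, hd, hdp⟩ := h
    exact ⟨d, hd, fun y hy => hdp hy⟩
  set r : ℝ := r1 / 2 with hrdef
  have hr : 0 < r := by positivity
  set B : Set (Euc m) := Metric.closedBall xinf r with hB
  set C : ℝ := c + ‖gradient f xinf‖ with hCdef
  have hgB : ∀ y ∈ B, c ≤ ‖gradient f y‖ ∧ ‖gradient f y‖ ≤ C := by
    intro y hy
    have hd : dist y xinf < r1 := lt_of_le_of_lt (Metric.mem_closedBall.mp hy) (by linarith)
    have h1 := hr1p y hd
    rw [dist_eq_norm] at h1
    constructor
    · have := norm_sub_norm_le (gradient f y) (gradient f xinf)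
      rw [hcdef]
      have habs := abs_norm_sub_norm_le (gradient f y) (gradient f xinf)
      have := abs_le.mp (le_of_lt (lt_of_le_of_lt habs h1))
      linarith [this.1]
    · have := norm_le_norm_add_norm_sub' (gradient f y) (gradient f xinf)
      calc ‖gradient f y‖ ≤ ‖gradient f xinf‖ + ‖gradient f y - gradient f xinf‖ := by
            have h2 := norm_sub_norm_le (gradient f y) (gradient f xinf)
            linarith
        _ ≤ C := by rw [hCdef]; linarith
  have hCpos : 0 < C := by rw [hCdef]; positivity
  -- Hessian bound on B
  obtain ⟨H0, hH0⟩ := (isCompact_closedBall xinf r).exists_bound_of_continuousOn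
    hhcont.continuousOn
  set H1 : ℝ := max H0 1 with hH1def
  have hH1 : ∀ y ∈ B, ‖hessOp f y‖ ≤ H1 := fun y hy => le_trans (hH0 y hy) (le_max_left _ _)
  have hH1pos : (0:ℝ) < H1 := lt_of_lt_of_le one_pos (le_max_right _ _)
  -- bound on the operators Aop
  obtain ⟨Δ0, hΔ0⟩ := Finite.exists_le fun i : Fin (m + 1) => |δ i|
  set Δ : ℝ := max Δ0 0 with hΔdef
  have hΔ : ∀ i, |δ i| ≤ Δ := fun i => le_trans (hΔ0 i) (le_max_left _ _)
  have hΔ0' : 0 ≤ Δ := le_max_right _ _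
  set M : ℝ := H1 + Δ * C ^ τ with hMdef
  have hCt : (0:ℝ) < C ^ τ := Real.rpow_pos_of_pos hCpos τ
  have hM : 0 < M := by rw [hMdef]; positivity
  have hMA : ∀ y ∈ B, ∀ jj : Fin (m + 1), ‖Aop f (δ jj) τ y‖ ≤ M := by
    intro y hy jj
    have hgτ : ‖gradient f y‖ ^ τ ≤ C ^ τ :=
      Real.rpow_le_rpow (norm_nonneg _) (hgB y hy).2 hτ.le
    have hgτ0 : 0 ≤ ‖gradient f y‖ ^ τ := Real.rpow_nonneg (norm_nonneg _) τ
    calc ‖Aop f (δ jj) τ y‖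
        ≤ ‖hessOp f y‖ + ‖(δ jj * ‖gradient f y‖ ^ τ) • ContinuousLinearMap.id ℝ (Euc m)‖ :=
          norm_add_le _ _
      _ ≤ H1 + |δ jj * ‖gradient f y‖ ^ τ| * 1 := by
          refine add_le_add (hH1 y hy) ?_
          refine le_trans (ContinuousLinearMap.opNorm_smul_le _ _) ?_
          rw [Real.norm_eq_abs]
          exact mul_le_mul_of_nonneg_left ContinuousLinearMap.norm_id_le (abs_nonneg _)
      _ ≤ M := by
          rw [mul_one, abs_mul, abs_of_nonneg hgτ0, hMdef]
          have h2 : |δ jj| * ‖gradient f y‖ ^ τ ≤ Δ * C ^ τ :=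
            mul_le_mul (hΔ jj) hgτ hgτ0 hΔ0'
          linarith
  -- the constants
  set W : ℝ := m * C / (kappa δ * c ^ τ) with hWdef
  set D : ℝ := (c ^ 2 / M) / max 1 W with hDdef
  have hct : (0:ℝ) < c ^ τ := Real.rpow_pos_of_pos hc τ
  have hmaxW : (0:ℝ) < max 1 W := lt_max_of_lt_left one_pos
  have hD : 0 < D := by
    rw [hDdef]
    exact div_pos (div_pos (by positivity) hM) hmaxW
  set γmin : ℝ := min γ0 (min (r / 6) (2 * D / (9 * H1))) with hγmindef
  have hγmin : 0 < γmin := by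
    rw [hγmindef]
    refine lt_min hγ0 (lt_min (by positivity) (by positivity))
  -- the decrease estimate
  have hstep : ∀ n, dist (x n) xinf ≤ r / 2 → γmin * D / 3 ≤ f (x n) - f (x (n + 1)) := by
    intro n hxd
    have hxB : x n ∈ B := Metric.mem_closedBall.mpr (by linarith)
    obtain ⟨hgnc, hgnC⟩ := hgB (x n) hxB
    have hgnz : gradient f (x n) ≠ 0 := by
      intro h
      rw [h, norm_zero] at hgnc
      linarith
    obtain ⟨hon, h0, h1⟩ := hseq n
    obtain ⟨hgood, -, p, harm, hminp, hx'⟩ := h1 hgnz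
    set A : Euc m →L[ℝ] Euc m := Aop f (δ (j n)) τ (x n) with hAdef
    set wh : Euc m := hatW f A (e n) (x n) with hwhdef
    have hDle : D ≤ ⟪wh, gradient f (x n)⟫ := by
      rw [hDdef, hWdef]
      exact key_lower hm hτ hκ hc hgnc hgnC hM (hMA _ hxB _) hon hgood
    set γ : ℝ := γ0 * (1/3:ℝ) ^ p with hγdef
    have hγpos : 0 < γ := by positivity
    have hwh1 : ‖wh‖ ≤ 1 := norm_hatW_le_one f A (e n) (x n)
    have hγlb : γmin ≤ γ := by
      rcases Nat.eq_zero_or_pos p with hp | hp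
      · rw [hγdef, hp]
        simp only [pow_zero, mul_one]
        exact min_le_left _ _
      · obtain ⟨q, rfl⟩ : ∃ q, p = q + 1 := ⟨p - 1, by omega⟩
        have hfail := hminp q (by omega)
        set γ' : ℝ := γ0 * (1/3:ℝ) ^ q with hγ'def
        have hγ'3 : γ' = 3 * γ := by rw [hγdef, hγ'def]; ring
        have hγ'pos : 0 < γ' := by positivity
        rcases le_or_gt γ' (r / 2) with hcase | hcase
        · -- use the quadratic bound to get a lower bound on γ'
          have hmem2 : x n + (-(γ' • wh)) ∈ B := by
            rw [hB, Metric.mem_closedBall]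
            calc dist (x n + -(γ' • wh)) xinf ≤ dist (x n + -(γ' • wh)) (x n) + dist (x n) xinf :=
                  dist_triangle _ _ _
              _ ≤ γ' + r / 2 := by
                  have : dist (x n + -(γ' • wh)) (x n) = ‖γ' • wh‖ := by
                    rw [dist_eq_norm]
                    simp
                  rw [this, norm_smul, Real.norm_eq_abs, abs_of_pos hγ'pos]
                  have h3 : γ' * ‖wh‖ ≤ γ' * 1 := by gcongr
                  rw [mul_one] at h3
                  exact add_le_add h3 hxd
              _ ≤ r := by linarith
          have hq := quad_bound hf (convex_closedBall xinf r) hH1 hxB hmem2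
          unfold armijo at hfail
          push_neg at hfail
          have hsubeq : x n - γ' • wh = x n + -(γ' • wh) := by
            rw [sub_eq_add_neg]
          rw [hsubeq] at hfail
          have hinner : ⟪gradient f (x n), -(γ' • wh)⟫ = -(γ' * ⟪wh, gradient f (x n)⟫) := by
            rw [inner_neg_right, real_inner_smul_right, real_inner_comm]
          have hnorm2 : ‖-(γ' • wh)‖ ^ 2 ≤ γ' ^ 2 := by
            rw [norm_neg, norm_smul, Real.norm_eq_abs, abs_of_pos hγ'pos]
            have h7 : ‖wh‖ ^ 2 ≤ 1 := by nlinarith [norm_nonneg wh]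
            nlinarith [mul_le_mul_of_nonneg_left h7 (sq_nonneg γ')]
          have hcomb : -(γ' * ⟪wh, gradient f (x n)⟫) / 3 <
              -(γ' * ⟪wh, gradient f (x n)⟫) + H1 * γ' ^ 2 := by
            calc -(γ' * ⟪wh, gradient f (x n)⟫) / 3 < f (x n + -(γ' • wh)) - f (x n) := hfail
              _ ≤ ⟪gradient f (x n), -(γ' • wh)⟫ + H1 * ‖-(γ' • wh)‖ ^ 2 := hq
              _ ≤ -(γ' * ⟪wh, gradient f (x n)⟫) + H1 * γ' ^ 2 := by
                  rw [hinner]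
                  gcongr
          -- (2/3) γ' ⟪wh, g⟫ < H1 γ'^2, with ⟪wh,g⟫ ≥ D, hence γ' > 2D/(3H1)
          have hkey : 2 * D / (9 * H1) ≤ γ := by
            have h4 : (2/3) * γ' * D ≤ (2/3) * γ' * ⟪wh, gradient f (x n)⟫ := by
              gcongr
            have h5 : (2/3) * γ' * ⟪wh, gradient f (x n)⟫ < H1 * γ' ^ 2 := by nlinarith
            have h6 : (2/3) * D < H1 * γ' := by
              have := mul_lt_mul_of_pos_left (lt_of_le_of_lt h4 h5) (inv_pos.mpr hγ'pos)
              calc (2/3) * D = γ'⁻¹ * ((2/3) * γ' * D) := by field_simp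
                _ < γ'⁻¹ * (H1 * γ' ^ 2) := this
                _ = H1 * γ' := by field_simp
            rw [div_le_iff₀ (by positivity), hγ'3] at *
            nlinarith
          exact le_trans (le_trans (min_le_right _ _) (min_le_right _ _)) hkey
        · have : r / 6 ≤ γ := by
            rw [hγ'3] at hcase
            linarith
          exact le_trans (le_trans (min_le_right _ _) (min_le_left _ _)) this
    -- conclude the decrease
    have harm' := harm
    unfold armijo at harm'
    rw [hx']
    have h2 : γmin * D ≤ γ * ⟪wh, gradient f (x n)⟫ :=
      mul_le_mul hγlb hDle hD.le hγpos.le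
    have h3 : f (x n - γ • wh) - f (x n) ≤ -(γ * ⟪wh, gradient f (x n)⟫) / 3 := harm'
    linarith
  -- final contradiction
  have hev : ∀ᶠ k in atTop, dist (x (φ k)) xinf ≤ r / 2 := by
    have h := Metric.tendsto_nhds.mp hφt (r / 2) (by positivity)
    filter_upwards [h] with k hk using hk.le
  have hev2 : ∀ᶠ k in atTop, γmin * D / 3 ≤ f (x (φ k)) - f (x (φ k + 1)) :=
    hev.mono fun k hk => hstep _ hk
  have htend : Tendsto (fun k => f (x (φ k)) - f (x (φ k + 1))) atTop (𝓝 0) :=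
    hdiff0.comp hφm.tendsto_atTop
  have hle : γmin * D / 3 ≤ 0 := ge_of_tendsto htend hev2
  nlinarith
end
end

section
/- Let f : ℝ^m → ℝ be a C³ function and let x* be a non-degenerate critical point of f, i.e. ∇f(x*) = 0 and ∇²f(x*) is invertible. Let δ_0 ∈ ℝ, κ > 0 and 0 < τ ≤ 1. Let U be an open neighborhood of x* on which: x* is the only critical point of f; x ↦ (e_1(x), …, e_m(x)) is a C¹ orthonormal frame; and A(x) := ∇²f(x) + δ_0‖∇f(x)‖^τ·Id satisfies minsp(A(x)) ≥ κ‖∇f(x)‖^τ for x ≠ x*, with A(x*) = ∇²f(x*) invertible. Define w(x) := Σ_{i=1}^m (⟨∇f(x), e_i(x)⟩/‖A(x) e_i(x)‖)·e_i(x) (so w(x*) = 0) and H(x) := x − w(x). Then H is a C¹ map on some neighborhood of x*. -/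
open scoped RealInnerProductSpace
open Filter Topology

noncomputable section

open Asymptotics in
theorem aux_div {m : ℕ} {V : Set (Euc m)} (hV : IsOpen V) {xs : Euc m} (hxV : xs ∈ V)
    {n d : Euc m → ℝ}
    (hn : ContDiffOn ℝ 1 n V) (hn0 : n xs = 0)
    (hd : ContinuousOn d V) (hdpos : ∀ x ∈ V, 0 < d x)
    (hds : ∀ x ∈ V, x ≠ xs → ContDiffAt ℝ 1 d x)
    (hb : Tendsto (fun x => ‖n x‖ * ‖fderiv ℝ d x‖) (𝓝[V \ {xs}] xs) (𝓝 0)) :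
    ContDiffOn ℝ 1 (fun x => n x / d x) V := by
  have hVd : ∀ x ∈ V, d x ≠ 0 := fun x hx => (hdpos x hx).ne'
  have hnAt : ∀ x ∈ V, HasFDerivAt n (fderiv ℝ n x) x := fun x hx =>
    (((hn.contDiffAt (hV.mem_nhds hx)).differentiableAt one_ne_zero).hasFDerivAt)
  set N : Euc m → (Euc m →L[ℝ] ℝ) := fun x => fderiv ℝ n x with hN
  have hNc : ContinuousOn N V := hn.continuousOn_fderiv_of_isOpen hV le_rfl
  set G : Euc m → (Euc m →L[ℝ] ℝ) := fun x =>
    n x • ((-(d x ^ 2)⁻¹) • fderiv ℝ d x) + (d x)⁻¹ • N x with hGdef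
  have hG : ∀ x ∈ V, x ≠ xs → HasFDerivAt (fun y => n y / d y) (G x) x := by
    intro x hx hne
    have hdd : HasFDerivAt d (fderiv ℝ d x) x :=
      ((hds x hx hne).differentiableAt one_ne_zero).hasFDerivAt
    have hinv : HasFDerivAt (fun y => (d y)⁻¹) ((-(d x ^ 2)⁻¹) • fderiv ℝ d x) x :=
      (hasDerivAt_inv (hVd x hx)).comp_hasFDerivAt x hdd
    have := (hnAt x hx).mul hinv
    simpa only [div_eq_mul_inv, hGdef, Pi.mul_def] using this
  set L : Euc m →L[ℝ] ℝ := (d xs)⁻¹ • N xs with hL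
  have hdcx : ContinuousAt d xs := hd.continuousAt (hV.mem_nhds hxV)
  -- Tendsto of G
  have hGt : Tendsto G (𝓝[V \ {xs}] xs) (𝓝 L) := by
    have h1 : Tendsto (fun x => n x • fderiv ℝ d x) (𝓝[V \ {xs}] xs)
        (𝓝 (0 : Euc m →L[ℝ] ℝ)) := by
      apply squeeze_zero_norm' _ hb
      filter_upwards with x
      rw [norm_smul]
    have hdt : Tendsto d (𝓝[V \ {xs}] xs) (𝓝 (d xs)) :=
      hdcx.continuousWithinAt.mono Set.diff_subset
    have h1' : Tendsto (fun x => n x • ((-(d x ^ 2)⁻¹) • fderiv ℝ d x)) (𝓝[V \ {xs}] xs)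
        (𝓝 (0 : Euc m →L[ℝ] ℝ)) := by
      have : Tendsto (fun x => (-(d x ^ 2)⁻¹) • (n x • fderiv ℝ d x)) (𝓝[V \ {xs}] xs)
          (𝓝 ((-(d xs ^ 2)⁻¹) • (0 : Euc m →L[ℝ] ℝ))) :=
        (((hdt.pow 2).inv₀ (pow_ne_zero 2 (hVd xs hxV))).neg).smul h1
      simp only [smul_zero] at this
      refine this.congr fun x => ?_
      rw [smul_comm]
    have h2 : Tendsto (fun x => (d x)⁻¹ • N x) (𝓝[V \ {xs}] xs) (𝓝 L) := by
      exact (hdt.inv₀ (hVd xs hxV)).smul ((hNc xs hxV).mono Set.diff_subset)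
    have := h1'.add h2
    rwa [zero_add] at this
  -- differentiability at xs
  have hLxs : HasFDerivAt (fun y => n y / d y) L xs := by
    rw [show HasFDerivAt (fun y => n y / d y) L xs ↔ _ from hasFDerivAt_iff_isLittleO ..]
    have key : ∀ x : Euc m, n x / d x - n xs / d xs - L (x - xs) =
        (d x)⁻¹ * (n x - n xs - N xs (x - xs)) +
          ((d x)⁻¹ - (d xs)⁻¹) * (N xs (x - xs)) := by
      intro x
      simp only [hn0, zero_div, div_eq_mul_inv, hL, ContinuousLinearMap.coe_smul',
        Pi.smul_apply, smul_eq_mul]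
      ring
    simp only [key]
    have o1 : (fun x => (d x)⁻¹ * (n x - n xs - N xs (x - xs))) =o[𝓝 xs]
        fun x => x - xs := by
      have hbig : (fun x => (d x)⁻¹) =O[𝓝 xs] (fun _ => (1 : ℝ)) :=
        (hdcx.inv₀ (hVd xs hxV)).isBigO_one ℝ
      have hlit : (fun x => n x - n xs - N xs (x - xs)) =o[𝓝 xs] fun x => x - xs :=
        (hnAt xs hxV).isLittleO
      have := hbig.mul_isLittleO hlit.norm_right
      refine (this.congr' (by rfl) ?_).of_norm_right
      filter_upwards with x using one_mul _
    have o2 : (fun x => ((d x)⁻¹ - (d xs)⁻¹) * (N xs (x - xs))) =o[𝓝 xs]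
        fun x => x - xs := by
      have hlit : (fun x => (d x)⁻¹ - (d xs)⁻¹) =o[𝓝 xs] (fun _ => (1 : ℝ)) := by
        rw [isLittleO_one_iff]
        have h5 : Tendsto (fun x => (d x)⁻¹ - (d xs)⁻¹) (𝓝 xs) (𝓝 ((d xs)⁻¹ - (d xs)⁻¹)) :=
          Filter.Tendsto.sub (hdcx.inv₀ (hVd xs hxV)) tendsto_const_nhds
        simpa using h5
      have hbig : (fun x => N xs (x - xs)) =O[𝓝 xs] fun x => x - xs :=
        ((N xs).isBoundedLinearMap.isBigO_comp (f := fun x => x - xs) (𝓝 xs))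
      have := hlit.mul_isBigO hbig.norm_right
      refine (this.congr' (by rfl) ?_).of_norm_right
      filter_upwards with x using one_mul _
    exact o1.add o2
  -- assemble
  have hW : IsOpen (V \ {xs}) := hV.sdiff isClosed_singleton
  have hsW : ContDiffOn ℝ 1 (fun y => n y / d y) (V \ {xs}) := by
    intro x hx
    exact ((hn.contDiffAt (hV.mem_nhds hx.1)).div (hds x hx.1 hx.2) (hVd x hx.1)).contDiffWithinAt
  rw [show (1 : WithTop ℕ∞) = 0 + 1 from rfl, contDiffOn_succ_iff_fderiv_of_isOpen hV]
  refine ⟨?_, by simp, ?_⟩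
  · intro x hx
    rcases eq_or_ne x xs with rfl | hne
    · exact hLxs.differentiableAt.differentiableWithinAt
    · exact (hG x hx hne).differentiableAt.differentiableWithinAt
  · rw [contDiffOn_zero]
    intro x hx
    rcases eq_or_ne x xs with rfl | hne
    · rw [← continuousWithinAt_diff_self]
      have : Tendsto G (𝓝[V \ {x}] x) (𝓝 (fderiv ℝ (fun y => n y / d y) x)) := by
        rwa [hLxs.fderiv]
      refine this.congr' ?_
      filter_upwards [self_mem_nhdsWithin] with y hy
      exact ((hG y hy.1 hy.2).fderiv).symm
    · have hcW : ContinuousOn (fderiv ℝ fun y => n y / d y) (V \ {xs}) :=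
        hsW.continuousOn_fderiv_of_isOpen hW le_rfl
      exact ((hcW x ⟨hx, hne⟩).continuousAt (hW.mem_nhds ⟨hx, hne⟩)).continuousWithinAt

set_option maxHeartbeats 1000000 in
/-- Near a non-degenerate critical point `x*`, with a `C¹` orthonormal frame `e` on a
neighbourhood `U` on which `x*` is the only critical point and
`A(x) = ∇²f(x) + δ₀‖∇f(x)‖^τ Id` satisfies `minsp(A(x)) ≥ κ‖∇f(x)‖^τ` for `x ≠ x*`,
the map `H(x) = x − Σᵢ (⟨∇f(x), eᵢ(x)⟩/‖A(x) eᵢ(x)‖) eᵢ(x)` is `C¹` on some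
neighbourhood of `x*`. -/
theorem stmt15 {m : ℕ} (hm : 1 ≤ m) (f : Euc m → ℝ) (hf : ContDiff ℝ 3 f)
    (xs : Euc m) (hcrit : gradient f xs = 0) (hnd : IsUnit (hessOp f xs))
    (δ0 κ τ : ℝ) (hκ : 0 < κ) (hτ0 : 0 < τ) (hτ1 : τ ≤ 1)
    (U : Set (Euc m)) (hU : IsOpen U) (hxU : xs ∈ U)
    (honly : ∀ x ∈ U, x ≠ xs → gradient f x ≠ 0)
    (e : Fin m → Euc m → Euc m)
    (heC1 : ∀ i : Fin m, ContDiffOn ℝ 1 (e i) U)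
    (heON : ∀ x ∈ U, Orthonormal ℝ (fun i => e i x))
    (hA : ∀ x ∈ U, x ≠ xs →
      κ * ‖gradient f x‖ ^ τ ≤
        minsp (hessOp f x + (δ0 * ‖gradient f x‖ ^ τ) • ContinuousLinearMap.id ℝ (Euc m))) :
    ∃ V : Set (Euc m), IsOpen V ∧ xs ∈ V ∧
      ContDiffOn ℝ 1 (fun x => x - ∑ i : Fin m,
        (⟪gradient f x, e i x⟫ /
          ‖(hessOp f x + (δ0 * ‖gradient f x‖ ^ τ) • ContinuousLinearMap.id ℝ (Euc m))
            (e i x)‖) • e i x) V := by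
  classical
  -- smoothness of the gradient and Hessian
  have hgrad2 : ContDiff ℝ 2 (gradient f) := by
    have h1 : ContDiff ℝ 2 (fderiv ℝ f) := hf.fderiv_right (by norm_num)
    exact ((InnerProductSpace.toDual ℝ (Euc m)).symm.contDiff).comp h1
  have hgrad1 : ContDiff ℝ 1 (gradient f) := hgrad2.of_le (by norm_num)
  have hhess : ContDiff ℝ 1 (hessOp f) := hgrad2.fderiv_right (by norm_num)
  have hgc : Continuous (gradient f) := hgrad2.continuous
  have hφc : Continuous (fun x => ‖gradient f x‖ ^ τ) :=
    (Real.continuous_rpow_const hτ0.le).comp hgc.norm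
  have hφxs : ‖gradient f xs‖ ^ τ = 0 := by
    rw [hcrit, norm_zero, Real.zero_rpow hτ0.ne']
  -- the vector field A(x) e_i(x), in expanded form
  set F : Fin m → Euc m → Euc m := fun i x =>
    hessOp f x (e i x) + (δ0 * ‖gradient f x‖ ^ τ) • e i x with hFdef
  have hFc : ∀ i, ContinuousOn (F i) U := fun i =>
    (hhess.continuous.continuousOn.clm_apply (heC1 i).continuousOn).add
      (((continuous_const.mul hφc).continuousOn).smul (heC1 i).continuousOn)
  have he1 : ∀ x ∈ U, ∀ i, ‖e i x‖ = 1 := fun x hx i => (heON x hx).1 i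
  have hc0 : ∀ i, 0 < ‖F i xs‖ := by
    intro i
    have hFxs : F i xs = hessOp f xs (e i xs) := by
      simp [hFdef, hφxs]
    rw [hFxs, norm_pos_iff]
    intro h0
    obtain ⟨u, hu⟩ := hnd
    have : e i xs = 0 := by
      have h1 : (↑u⁻¹ * ↑u : Euc m →L[ℝ] Euc m) (e i xs) = e i xs := by
        rw [u.inv_mul]; rfl
      rw [ContinuousLinearMap.mul_apply, hu, h0, map_zero] at h1
      exact h1.symm
    have h2 := he1 xs hxU i
    rw [this, norm_zero] at h2
    norm_num at h2
  -- the neighbourhood V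
  set V : Set (Euc m) := ⋂ i : Fin m, (U ∩ (F i) ⁻¹' {y | ‖F i xs‖ / 2 < ‖y‖}) with hVdef
  have hVopen : IsOpen V := isOpen_iInter_of_finite fun i =>
    (hFc i).isOpen_inter_preimage hU (isOpen_lt continuous_const continuous_norm)
  have hxsV : xs ∈ V := Set.mem_iInter.2 fun i => ⟨hxU, half_lt_self (hc0 i)⟩
  have hVU : V ⊆ U := fun x hx => (Set.mem_iInter.1 hx ⟨0, hm⟩).1
  have hVd : ∀ i, ∀ x ∈ V, ‖F i xs‖ / 2 < ‖F i x‖ := fun i x hx => (Set.mem_iInter.1 hx i).2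
  refine ⟨V, hVopen, hxsV, ?_⟩
  simp only [ContinuousLinearMap.add_apply, ContinuousLinearMap.smul_apply,
    ContinuousLinearMap.id_apply]
  refine ContDiffOn.sub contDiffOn_id (ContDiffOn.sum fun i _ => ContDiffOn.smul (f := fun x => ⟪gradient f x, e i x⟫ / ‖hessOp f x (e i x) + (δ0 * ‖gradient f x‖ ^ τ) • e i x‖) ?_ ((heC1 i).mono hVU))
  -- the scalar coefficient is C¹ on V, by `aux_div`
  have hdpos : ∀ x ∈ V, 0 < ‖F i x‖ := fun x hx =>
    lt_trans (half_pos (hc0 i)) (hVd i x hx)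
  refine aux_div hVopen hxsV ?_ ?_ ?_ hdpos ?_ ?_
  · exact ContDiffOn.inner ℝ (hgrad1.contDiffOn) ((heC1 i).mono hVU)
  · rw [hcrit]; exact inner_zero_left _
  · exact continuous_norm.comp_continuousOn ((hFc i).mono hVU)
  · -- C¹ away from xs
    intro x hx hne
    have hxU' : x ∈ U := hVU hx
    have hgx : gradient f x ≠ 0 := honly x hxU' hne
    have heix : ContDiffAt ℝ 1 (e i) x := (heC1 i).contDiffAt (hU.mem_nhds hxU')
    have hν : ContDiffAt ℝ 1 (fun y => ‖gradient f y‖) x :=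
      (hgrad1.contDiffAt).norm ℝ hgx
    have hφx : ContDiffAt ℝ 1 (fun y => ‖gradient f y‖ ^ τ) x :=
      (Real.contDiffAt_rpow_const_of_ne (p := τ) (norm_ne_zero_iff.2 hgx)).comp (f := fun y => ‖gradient f y‖) x hν
    have hFx : ContDiffAt ℝ 1 (F i) x :=
      ((hhess.contDiffAt).clm_apply heix).add ((contDiffAt_const.mul hφx).smul heix)
    exact hFx.norm ℝ (norm_pos_iff.1 (hdpos x hx))
  · -- the key tendsto estimate
    set l := 𝓝[V \ {xs}] xs with hldef
    set DP : Euc m → (Euc m →L[ℝ] Euc m) := fun x => fderiv ℝ (fun y => hessOp f y (e i y)) x with hDP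
    set E' : Fin m → Euc m → (Euc m →L[ℝ] Euc m) := fun i x => fderiv ℝ (e i) x with hE'
    set β : Euc m → ℝ := fun x =>
      ‖gradient f x‖ * ‖DP x‖
      + |δ0| * (‖gradient f x‖ ^ τ * ‖gradient f x‖) * ‖E' i x‖
      + |δ0| * τ * ‖gradient f x‖ ^ τ * ‖hessOp f x‖ with hβdef
    have hlU : l ≤ 𝓝[U] xs := nhdsWithin_mono xs (fun x hx => hVU hx.1)
    have t1 : Tendsto (fun x => ‖gradient f x‖) l (𝓝 0) := by
      simpa [hcrit] using (hgc.norm.tendsto xs).mono_left nhdsWithin_le_nhds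
    have t2 : Tendsto (fun x => ‖gradient f x‖ ^ τ) l (𝓝 0) := by
      simpa [hφxs] using (hφc.tendsto xs).mono_left nhdsWithin_le_nhds
    have hPC : ContDiffOn ℝ 1 (fun y => hessOp f y (e i y)) U :=
      (hhess.contDiffOn).clm_apply (heC1 i)
    have t3 : Tendsto (fun x => ‖DP x‖) l (𝓝 ‖DP xs‖) :=
      (((hPC.continuousOn_fderiv_of_isOpen hU le_rfl xs hxU).mono_left hlU)).norm
    have t4 : Tendsto (fun x => ‖E' i x‖) l (𝓝 ‖E' i xs‖) :=
      ((((heC1 i).continuousOn_fderiv_of_isOpen hU le_rfl xs hxU).mono_left hlU)).norm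
    have t5 : Tendsto (fun x => ‖hessOp f x‖) l (𝓝 ‖hessOp f xs‖) :=
      (hhess.continuous.norm.tendsto xs).mono_left nhdsWithin_le_nhds
    have hβ : Tendsto β l (𝓝 0) := by
      have := ((t1.mul t3).add
        (((tendsto_const_nhds (x := |δ0|)).mul (t2.mul t1)).mul (t4))).add
        ((((tendsto_const_nhds (x := |δ0| * τ)).mul t2)).mul t5)
      simpa only [zero_mul, mul_zero, add_zero, zero_add] using this
    apply squeeze_zero' ?_ ?_ hβ
    · filter_upwards with x using by positivity
    · filter_upwards [self_mem_nhdsWithin] with x hx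
      obtain ⟨hxV, hne'⟩ := hx
      have hne : x ≠ xs := hne'
      have hxU' : x ∈ U := hVU hxV
      have hgx : gradient f x ≠ 0 := honly x hxU' hne
      have hνpos : 0 < ‖gradient f x‖ := norm_pos_iff.2 hgx
      have heix : HasFDerivAt (e i) (E' i x) x :=
        (((heC1 i).contDiffAt (hU.mem_nhds hxU')).differentiableAt one_ne_zero).hasFDerivAt
      have hgd : HasFDerivAt (gradient f) (hessOp f x) x :=
        (hgrad1.differentiable one_ne_zero x).hasFDerivAt
      -- derivative of the norm of the gradient
      have hnormg : DifferentiableAt ℝ (fun y : Euc m => ‖y‖) (gradient f x) :=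
        (contDiffAt_norm (𝕜 := ℝ) (n := 1) hgx).differentiableAt one_ne_zero
      set Dν : Euc m →L[ℝ] ℝ :=
        (fderiv ℝ (fun y : Euc m => ‖y‖) (gradient f x)).comp (hessOp f x) with hDν
      have hν : HasFDerivAt (fun y => ‖gradient f y‖) Dν x :=
        (hnormg.hasFDerivAt).comp x hgd
      have hDνle : ‖Dν‖ ≤ ‖hessOp f x‖ := by
        calc ‖Dν‖ ≤ ‖fderiv ℝ (fun y : Euc m => ‖y‖) (gradient f x)‖ * ‖hessOp f x‖ :=
              ContinuousLinearMap.opNorm_comp_le _ _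
          _ ≤ 1 * ‖hessOp f x‖ := by
              gcongr
              exact norm_fderiv_le_of_lipschitz (f := fun y : Euc m => ‖y‖)
                (x₀ := gradient f x) ℝ lipschitzWith_one_norm
          _ = ‖hessOp f x‖ := one_mul _
      have hφ' : HasFDerivAt (fun y => ‖gradient f y‖ ^ τ)
          ((τ * ‖gradient f x‖ ^ (τ - 1)) • Dν) x :=
        (Real.hasDerivAt_rpow_const (p := τ) (Or.inl hνpos.ne')).comp_hasFDerivAt (f := fun y => ‖gradient f y‖) x hν
      have hP : HasFDerivAt (fun y => hessOp f y (e i y)) (DP x) x := by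
        have : DifferentiableAt ℝ (fun y => hessOp f y (e i y)) x :=
          ((hPC.contDiffAt (hU.mem_nhds hxU')).differentiableAt one_ne_zero)
        exact this.hasFDerivAt
      have hc' : HasFDerivAt (fun y => δ0 * ‖gradient f y‖ ^ τ)
          (δ0 • ((τ * ‖gradient f x‖ ^ (τ - 1)) • Dν)) x := hφ'.const_mul δ0
      have hsm : HasFDerivAt (fun y => (δ0 * ‖gradient f y‖ ^ τ) • e i y)
          ((δ0 * ‖gradient f x‖ ^ τ) • E' i x +
            (δ0 • ((τ * ‖gradient f x‖ ^ (τ - 1)) • Dν)).smulRight (e i x)) x :=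
        hc'.smul heix
      set DF : Euc m →L[ℝ] Euc m := DP x + ((δ0 * ‖gradient f x‖ ^ τ) • E' i x +
            (δ0 • ((τ * ‖gradient f x‖ ^ (τ - 1)) • Dν)).smulRight (e i x)) with hDFdef
      have hF' : HasFDerivAt (F i) DF x := hP.add hsm
      have hFix0 : F i x ≠ 0 := norm_pos_iff.1 (hdpos x hxV)
      have hnormF : DifferentiableAt ℝ (fun y : Euc m => ‖y‖) (F i x) :=
        (contDiffAt_norm (𝕜 := ℝ) (n := 1) hFix0).differentiableAt one_ne_zero
      have hdF : HasFDerivAt (fun y => ‖F i y‖)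
          ((fderiv ℝ (fun y : Euc m => ‖y‖) (F i x)).comp DF) x :=
        (hnormF.hasFDerivAt).comp x hF'
      rw [hdF.fderiv]
      -- now the numeric estimate
      have hinner : ‖⟪gradient f x, e i x⟫‖ ≤ ‖gradient f x‖ := by
        rw [Real.norm_eq_abs]
        calc |⟪gradient f x, e i x⟫| ≤ ‖gradient f x‖ * ‖e i x‖ := abs_real_inner_le_norm _ _
          _ = ‖gradient f x‖ := by rw [he1 x hxU' i, mul_one]
      have hφnn : 0 ≤ ‖gradient f x‖ ^ τ := Real.rpow_nonneg (norm_nonneg _) τ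
      have hτν : 0 ≤ τ * ‖gradient f x‖ ^ (τ - 1) :=
        mul_nonneg hτ0.le (Real.rpow_nonneg (norm_nonneg _) _)
      have hDle : ‖(fderiv ℝ (fun y : Euc m => ‖y‖) (F i x)).comp DF‖ ≤
          ‖DP x‖ + (|δ0| * ‖gradient f x‖ ^ τ * ‖E' i x‖ +
            |δ0| * (τ * ‖gradient f x‖ ^ (τ - 1)) * ‖hessOp f x‖) := by
        calc ‖(fderiv ℝ (fun y : Euc m => ‖y‖) (F i x)).comp DF‖
            ≤ ‖fderiv ℝ (fun y : Euc m => ‖y‖) (F i x)‖ * ‖DF‖ :=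
              ContinuousLinearMap.opNorm_comp_le _ _
          _ ≤ 1 * ‖DF‖ := by
              gcongr
              exact norm_fderiv_le_of_lipschitz (f := fun y : Euc m => ‖y‖)
                (x₀ := F i x) ℝ lipschitzWith_one_norm
          _ = ‖DF‖ := one_mul _
          _ = ‖DP x + ((δ0 * ‖gradient f x‖ ^ τ) • E' i x +
              (δ0 • ((τ * ‖gradient f x‖ ^ (τ - 1)) • Dν)).smulRight (e i x))‖ := by rw [hDFdef]
          _ ≤ ‖DP x‖ + (‖(δ0 * ‖gradient f x‖ ^ τ) • E' i x‖ +
              ‖(δ0 • ((τ * ‖gradient f x‖ ^ (τ - 1)) • Dν)).smulRight (e i x)‖) :=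
              (norm_add_le _ _).trans (by gcongr; exact norm_add_le _ _)
          _ ≤ ‖DP x‖ + (|δ0| * ‖gradient f x‖ ^ τ * ‖E' i x‖ +
              |δ0| * (τ * ‖gradient f x‖ ^ (τ - 1)) * ‖hessOp f x‖) := by
              gcongr
              · calc ‖(δ0 * ‖gradient f x‖ ^ τ) • E' i x‖
                    ≤ ‖(δ0 * ‖gradient f x‖ ^ τ : ℝ)‖ * ‖E' i x‖ :=
                      norm_smul_le (δ0 * ‖gradient f x‖ ^ τ) (E' i x)
                  _ = |δ0| * ‖gradient f x‖ ^ τ * ‖E' i x‖ := by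
                      rw [Real.norm_eq_abs, abs_mul, abs_of_nonneg hφnn, mul_assoc]
              · rw [ContinuousLinearMap.norm_smulRight_apply, he1 x hxU' i, mul_one]
                calc ‖δ0 • ((τ * ‖gradient f x‖ ^ (τ - 1)) • Dν)‖
                    ≤ ‖(δ0 : ℝ)‖ * ‖(τ * ‖gradient f x‖ ^ (τ - 1)) • Dν‖ :=
                      norm_smul_le δ0 ((τ * ‖gradient f x‖ ^ (τ - 1)) • Dν)
                  _ = |δ0| * ‖(τ * ‖gradient f x‖ ^ (τ - 1)) • Dν‖ := by
                      rw [Real.norm_eq_abs]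
                  _ ≤ |δ0| * (τ * ‖gradient f x‖ ^ (τ - 1) * ‖Dν‖) := by
                      gcongr
                      calc ‖(τ * ‖gradient f x‖ ^ (τ - 1)) • Dν‖
                          ≤ ‖(τ * ‖gradient f x‖ ^ (τ - 1) : ℝ)‖ * ‖Dν‖ :=
                            norm_smul_le (τ * ‖gradient f x‖ ^ (τ - 1)) Dν
                        _ = τ * ‖gradient f x‖ ^ (τ - 1) * ‖Dν‖ := by
                            rw [Real.norm_eq_abs, abs_of_nonneg hτν]
                  _ ≤ |δ0| * (τ * ‖gradient f x‖ ^ (τ - 1) * ‖hessOp f x‖) := by gcongr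
                  _ = |δ0| * (τ * ‖gradient f x‖ ^ (τ - 1)) * ‖hessOp f x‖ := by ring
      have hsub : ‖gradient f x‖ * ‖gradient f x‖ ^ (τ - 1) = ‖gradient f x‖ ^ τ := by
        rw [show τ = 1 + (τ - 1) by ring, Real.rpow_add hνpos, Real.rpow_one]
        ring_nf
      calc ‖⟪gradient f x, e i x⟫‖ * ‖(fderiv ℝ (fun y : Euc m => ‖y‖) (F i x)).comp DF‖
          ≤ ‖gradient f x‖ * (‖DP x‖ + (|δ0| * ‖gradient f x‖ ^ τ * ‖E' i x‖ +
              |δ0| * (τ * ‖gradient f x‖ ^ (τ - 1)) * ‖hessOp f x‖)) :=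
            mul_le_mul hinner hDle (norm_nonneg _) (norm_nonneg _)
        _ = ‖gradient f x‖ * ‖DP x‖
            + |δ0| * (‖gradient f x‖ ^ τ * ‖gradient f x‖) * ‖E' i x‖
            + |δ0| * τ * (‖gradient f x‖ * ‖gradient f x‖ ^ (τ - 1)) * ‖hessOp f x‖ := by
            ring
        _ = β x := by rw [hsub]
end
end

section
/- Let A be a symmetric real m×m matrix, (e_1, …, e_m) an orthonormal basis of ℝ^m, and g ∈ ℝ^m with g ≠ 0. Define w := Σ_{i=1}^m (⟨g, e_i⟩/‖A e_i‖) e_i. Let κ > 0, τ > 0 and M > 0, and assume κ‖g‖^τ ≤ ‖A e_i‖ ≤ M for all i. Then ⟨w, g⟩ ≥ (κ/M)·‖w‖·‖g‖^{1+τ}. -/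
open scoped RealInnerProductSpace
open Filter Topology

noncomputable section

/-- For a symmetric `A`, an orthonormal basis `e`, `g ≠ 0`, and constants
`κ, τ, M > 0` with `κ‖g‖^τ ≤ ‖A eᵢ‖ ≤ M` for all `i`, the vector
`w = Σᵢ (⟨g, eᵢ⟩/‖A eᵢ‖) eᵢ` satisfies `⟨w, g⟩ ≥ (κ/M) ‖w‖ ‖g‖^{1+τ}`. -/
theorem stmt16 {m : ℕ} (hm : 1 ≤ m) (A : Euc m →L[ℝ] Euc m) (hA : IsSelfAdjoint A)
    (e : Fin m → Euc m) (he : Orthonormal ℝ e) (g : Euc m) (hg : g ≠ 0)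
    (κ τ M : ℝ) (hκ : 0 < κ) (hτ : 0 < τ) (hM : 0 < M)
    (hbound : ∀ i : Fin m, κ * ‖g‖ ^ τ ≤ ‖A (e i)‖ ∧ ‖A (e i)‖ ≤ M) :
    (κ / M) * ‖∑ i : Fin m, (⟪g, e i⟫ / ‖A (e i)‖) • e i‖ * ‖g‖ ^ (1 + τ) ≤
      ⟪∑ i : Fin m, (⟪g, e i⟫ / ‖A (e i)‖) • e i, g⟫ := by
  have hgpos : (0:ℝ) < ‖g‖ := norm_pos_iff.mpr hg
  have hgτ : (0:ℝ) < ‖g‖ ^ τ := Real.rpow_pos_of_pos hgpos τ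
  set c : Fin m → ℝ := fun i => ⟪g, e i⟫ with hc
  set a : Fin m → ℝ := fun i => ‖A (e i)‖ with ha
  have hapos : ∀ i, 0 < a i := fun i =>
    lt_of_lt_of_le (by positivity) (hbound i).1
  -- Parseval
  haveI : Nonempty (Fin m) := ⟨⟨0, hm⟩⟩
  have hcard : Fintype.card (Fin m) = Module.finrank ℝ (Euc m) := by simp
  set b : OrthonormalBasis (Fin m) ℝ (Euc m) :=
    (basisOfOrthonormalOfCardEqFinrank he hcard).toOrthonormalBasis
      (by rwa [coe_basisOfOrthonormalOfCardEqFinrank]) with hb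
  have hbe : ∀ i, b i = e i := fun i => by
    rw [hb, Module.Basis.coe_toOrthonormalBasis, coe_basisOfOrthonormalOfCardEqFinrank]
  have parseval : ∑ i, c i ^ 2 = ‖g‖ ^ 2 := by
    have := b.sum_inner_mul_inner g g
    simp only [hbe] at this
    rw [real_inner_self_eq_norm_sq] at this
    rw [← this]
    refine Finset.sum_congr rfl fun i _ => ?_
    rw [show ⟪e i, g⟫ = c i from (real_inner_comm (e i) g).symm]
    simp only [hc]; ring
  -- inner of w with g
  have hinner : ⟪∑ i : Fin m, (c i / a i) • e i, g⟫ = ∑ i, c i ^ 2 / a i := by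
    rw [sum_inner]
    refine Finset.sum_congr rfl fun i _ => ?_
    rw [real_inner_smul_left, show ⟪e i, g⟫ = c i from (real_inner_comm (e i) g).symm]
    ring
  -- norm of w squared
  have hnormsq : ‖∑ i : Fin m, (c i / a i) • e i‖ ^ 2 = ∑ i, (c i / a i) ^ 2 := by
    rw [← real_inner_self_eq_norm_sq, he.inner_sum]
    refine Finset.sum_congr rfl fun i _ => ?_
    simp [sq]
  -- lower bound for inner
  have h1 : ‖g‖ ^ 2 / M ≤ ∑ i, c i ^ 2 / a i := by
    rw [← parseval, Finset.sum_div]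
    refine Finset.sum_le_sum fun i _ => ?_
    exact div_le_div_of_nonneg_left (sq_nonneg _) (hapos i) (hbound i).2
  -- upper bound on norm
  have h2 : ‖∑ i : Fin m, (c i / a i) • e i‖ ≤ ‖g‖ / (κ * ‖g‖ ^ τ) := by
    have hsq : ‖∑ i : Fin m, (c i / a i) • e i‖ ^ 2 ≤ (‖g‖ / (κ * ‖g‖ ^ τ)) ^ 2 := by
      rw [hnormsq, div_pow, ← parseval, Finset.sum_div]
      refine Finset.sum_le_sum fun i _ => ?_
      rw [div_pow]
      apply div_le_div_of_nonneg_left (sq_nonneg _) (by positivity)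
      exact pow_le_pow_left₀ (by positivity) (hbound i).1 2
    nlinarith [norm_nonneg (∑ i : Fin m, (c i / a i) • e i),
      div_pos hgpos (by positivity : (0:ℝ) < κ * ‖g‖ ^ τ)]
  calc (κ / M) * ‖∑ i : Fin m, (c i / a i) • e i‖ * ‖g‖ ^ (1 + τ)
      ≤ (κ / M) * (‖g‖ / (κ * ‖g‖ ^ τ)) * ‖g‖ ^ (1 + τ) := by
        have : (0:ℝ) ≤ ‖g‖ ^ (1 + τ) := le_of_lt (Real.rpow_pos_of_pos hgpos _)
        gcongr
    _ = ‖g‖ ^ 2 / M := by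
        rw [Real.rpow_add hgpos, Real.rpow_one]
        field_simp
    _ ≤ ∑ i, c i ^ 2 / a i := h1
    _ = ⟪∑ i : Fin m, (c i / a i) • e i, g⟫ := hinner.symm
end
end

section
/- Let f : ℝ^m → ℝ be a C² function and let x* be a non-degenerate critical point of f, i.e. ∇f(x*) = 0 and ∇²f(x*) is invertible. Then for any δ_0 ∈ ℝ, κ > 0 and τ > 0, there exists an open neighborhood U of x* such that for every x ∈ U: minsp(∇²f(x) + δ_0‖∇f(x)‖^τ·Id) ≥ κ‖∇f(x)‖^τ. (Hence, near a non-degenerate critical point, the perturbation chosen by New Q-Newton's method Backtracking G is always the first one, δ_0.) -/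
open scoped RealInnerProductSpace
open Filter Topology

noncomputable section

/-- Near a non-degenerate critical point `x*` of a `C²` function `f`, for any `δ₀ ∈ ℝ`,
`κ > 0` and `τ > 0` there is an open neighbourhood `U` of `x*` on which
`minsp(∇²f(x) + δ₀‖∇f(x)‖^τ Id) ≥ κ‖∇f(x)‖^τ`. -/
theorem stmt19 {m : ℕ} (hm : 1 ≤ m) (f : Euc m → ℝ) (hf : ContDiff ℝ 2 f)
    (xs : Euc m) (hcrit : gradient f xs = 0) (hnd : IsUnit (hessOp f xs))
    (δ0 κ τ : ℝ) (hκ : 0 < κ) (hτ : 0 < τ) :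
    ∃ U : Set (Euc m), IsOpen U ∧ xs ∈ U ∧
      ∀ x ∈ U, κ * ‖gradient f x‖ ^ τ ≤
        minsp (hessOp f x + (δ0 * ‖gradient f x‖ ^ τ) • ContinuousLinearMap.id ℝ (Euc m)) := by
  -- a unit vector
  set e0 : Euc m := EuclideanSpace.single ⟨0, hm⟩ (1 : ℝ) with he0
  have he0n : ‖e0‖ = 1 := by simp [he0, EuclideanSpace.norm_single]
  -- inverse of the Hessian at xs
  set H := hessOp f xs with hH
  obtain ⟨u, hu⟩ := hnd
  set B : Euc m →L[ℝ] Euc m := ↑u⁻¹ with hBdef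
  have hBH : ∀ v : Euc m, B (H v) = v := by
    intro v
    have : (B * H) v = (1 : Euc m →L[ℝ] Euc m) v := by rw [← hu, hBdef, Units.inv_mul]
    simpa using this
  have hB0 : (0:ℝ) < ‖B‖ := by
    apply norm_pos_iff.2
    intro h
    have := hBH e0
    rw [h] at this
    simp at this
    rw [← this] at he0n
    simp at he0n
  set c : ℝ := ‖B‖⁻¹ with hc
  have hcpos : 0 < c := inv_pos.2 hB0
  have hlow : ∀ e : Euc m, ‖e‖ = 1 → c ≤ ‖H e‖ := by
    intro e he
    have h1 : (1:ℝ) ≤ ‖B‖ * ‖H e‖ := by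
      calc (1:ℝ) = ‖e‖ := he.symm
        _ = ‖B (H e)‖ := by rw [hBH]
        _ ≤ ‖B‖ * ‖H e‖ := B.le_opNorm _
    rw [hc, inv_le_iff_one_le_mul₀ hB0]
    linarith [h1]
  -- continuity
  have hgrad1 : ContDiff ℝ 1 (gradient f) := by
    have h1 : ContDiff ℝ 1 (fderiv ℝ f) := hf.fderiv_right (by norm_num)
    have : gradient f = fun x => (InnerProductSpace.toDual ℝ (Euc m)).symm (fderiv ℝ f x) := rfl
    rw [this]
    exact (InnerProductSpace.toDual ℝ (Euc m)).symm.contDiff.comp h1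
  have hHcont : Continuous (hessOp f) := hgrad1.continuous_fderiv one_ne_zero
  have hgcont : Continuous (fun x => ‖gradient f x‖ ^ τ) :=
    (Real.continuous_rpow_const hτ.le).comp hgrad1.continuous.norm
  have hφcont : Continuous (fun x => ‖hessOp f x - H‖ + (κ + |δ0|) * ‖gradient f x‖ ^ τ) := by
    exact ((hHcont.sub continuous_const).norm).add (continuous_const.mul hgcont)
  refine ⟨{x | ‖hessOp f x - H‖ + (κ + |δ0|) * ‖gradient f x‖ ^ τ < c}, ?_, ?_, ?_⟩
  · exact isOpen_lt hφcont continuous_const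
  · simp only [Set.mem_setOf_eq, hH, sub_self, norm_zero, hcrit, Real.zero_rpow hτ.ne']
    simpa using hcpos
  · intro x hx
    simp only [Set.mem_setOf_eq] at hx
    set g : ℝ := ‖gradient f x‖ ^ τ with hg
    have hg0 : 0 ≤ g := Real.rpow_nonneg (norm_nonneg _) τ
    refine le_csInf ⟨_, e0, he0n, rfl⟩ ?_
    rintro r ⟨e, he, rfl⟩
    have hdiff : ‖hessOp f x e - H e‖ ≤ ‖hessOp f x - H‖ := by
      calc ‖hessOp f x e - H e‖ = ‖(hessOp f x - H) e‖ := by simp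
        _ ≤ ‖hessOp f x - H‖ * ‖e‖ := (hessOp f x - H).le_opNorm e
        _ = ‖hessOp f x - H‖ := by rw [he, mul_one]
    have happ : (hessOp f x + (δ0 * g) • ContinuousLinearMap.id ℝ (Euc m)) e
        = H e + (hessOp f x e - H e) + (δ0 * g) • e := by
      simp only [ContinuousLinearMap.add_apply, ContinuousLinearMap.coe_smul',
        Pi.smul_apply, ContinuousLinearMap.coe_id', id_eq]
      abel
    have hkey : ‖H e‖ ≤ ‖(hessOp f x + (δ0 * g) • ContinuousLinearMap.id ℝ (Euc m)) e‖
        + (‖hessOp f x e - H e‖ + ‖(δ0 * g) • e‖) := by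
      have : H e = (hessOp f x + (δ0 * g) • ContinuousLinearMap.id ℝ (Euc m)) e
          - ((hessOp f x e - H e) + (δ0 * g) • e) := by rw [happ]; abel
      calc ‖H e‖ = ‖(hessOp f x + (δ0 * g) • ContinuousLinearMap.id ℝ (Euc m)) e
          - ((hessOp f x e - H e) + (δ0 * g) • e)‖ := by rw [← this]
        _ ≤ _ := le_trans (norm_sub_le _ _) (by gcongr; exact norm_add_le _ _)
    have hsmul : ‖(δ0 * g) • e‖ = |δ0| * g := by
      rw [norm_smul, he, mul_one, Real.norm_eq_abs, abs_mul, abs_of_nonneg hg0]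
    have := hlow e he
    rw [hsmul] at hkey
    linarith [hdiff]
end
end
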